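/- Let h_l : Σ_l → ℝ be harmonic on rectangles Σ_l = (-l, l) × (0,1), uniformly bounded by M, vanishing on the top and bottom edges [-l+1, l-1] × {0,1}. Then for every fixed compact K ⊂ ℝ × (0,1), sup_K |h_l| → 0 as l → ∞. -/

import Mathlib

/-- A function on `ℝ²` is harmonic on a set if it is `C²` there and its Laplacian
(computed via second derivatives of the coordinate slices) vanishes. -/
def HarmonicOnRect (u : ℝ × ℝ → ℝ) (S : Set (ℝ × ℝ)) : Prop :=
  ContDiffOn ℝ 2 u S ∧ ∀ p ∈ S,
    deriv (deriv fun x => u (x, p.2)) p.1 + deriv (deriv fun y => u (p.1, y)) p.2 = 0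

/-!
Compare `± h_l` on the shrunken rectangle `[-(l-1), l-1] × [0,1]` with the harmonic barrier
`c · cosh s · cos (t - 1/2)`. Since `cos (t - 1/2) ≥ cos (1/2) > 0` on the closed strip, taking
`c = M / (cos (1/2) · cosh (l-1))` makes the barrier dominate `M` on the vertical sides, while on the
horizontal edges `h_l = 0`. The elementary maximum principle then gives
`|h_l (s,t)| ≤ M cosh s / (cos (1/2) cosh (l-1))`, which tends to `0` uniformly for `|s|` bounded.
-/

open Set Filter Topology Real

theorem HarmonicOnRect.mono {u : ℝ × ℝ → ℝ} {S T : Set (ℝ × ℝ)} (hu : HarmonicOnRect u S)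
    (hTS : T ⊆ S) : HarmonicOnRect u T :=
  ⟨hu.1.mono hTS, fun p hp => hu.2 p (hTS hp)⟩

theorem ContinuousOn.abs_le_of_mem_closure {X : Type*} [TopologicalSpace X] {f : X → ℝ}
    {s : Set X} {M : ℝ} (hf : ContinuousOn f (closure s)) (hM : ∀ x ∈ s, |f x| ≤ M) :
    ∀ x ∈ closure s, |f x| ≤ M := fun x hx =>
  ((hf x hx).mono subset_closure).abs.closure_le hx continuousWithinAt_const hM

theorem IsLocalMax.deriv_deriv_nonpos {f : ℝ → ℝ} {x : ℝ} (hmax : IsLocalMax f x)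
    (hf : ContinuousAt f x) : deriv (deriv f) x ≤ 0 := by
  by_contra! hpos
  -- by the second-derivative test `x` is also a local minimum, so `f` is locally constant
  have hconst : f =ᶠ[𝓝 x] fun _ => f x := by
    filter_upwards [hmax, isLocalMin_of_deriv_deriv_pos hpos hmax.deriv_eq_zero hf] with y h₁ h₂
    exact le_antisymm h₁ h₂
  refine hpos.ne' ?_
  rw [hconst.deriv.deriv_eq]
  simp

theorem deriv_deriv_eq_iteratedDeriv_two (f : ℝ → ℝ) : deriv (deriv f) = iteratedDeriv 2 f := by
  rw [iteratedDeriv_succ', iteratedDeriv_one]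

/-- `HarmonicOnRect u S` unfolds to `ContDiffOn ℝ 2 u S ∧ ∀ p ∈ S, sliceLaplacian u p = 0`. -/
noncomputable def sliceLaplacian (u : ℝ × ℝ → ℝ) (p : ℝ × ℝ) : ℝ :=
  deriv (deriv fun x => u (x, p.2)) p.1 + deriv (deriv fun y => u (p.1, y)) p.2

section SliceLaplacian

variable {n : WithTop ℕ∞} {u v : ℝ × ℝ → ℝ} {p : ℝ × ℝ}

theorem ContDiffAt.comp_mk_left (hu : ContDiffAt ℝ n u p) :
    ContDiffAt ℝ n (fun x => u (x, p.2)) p.1 :=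
  hu.comp p.1 (contDiffAt_id.prodMk contDiffAt_const)

theorem ContDiffAt.comp_mk_right (hu : ContDiffAt ℝ n u p) :
    ContDiffAt ℝ n (fun y => u (p.1, y)) p.2 :=
  hu.comp p.2 (contDiffAt_const.prodMk contDiffAt_id)

theorem sliceLaplacian_add (hu : ContDiffAt ℝ 2 u p) (hv : ContDiffAt ℝ 2 v p) :
    sliceLaplacian (fun q => u q + v q) p = sliceLaplacian u p + sliceLaplacian v p := by
  simp only [sliceLaplacian, deriv_deriv_eq_iteratedDeriv_two]
  rw [iteratedDeriv_fun_add hu.comp_mk_left hv.comp_mk_left,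
    iteratedDeriv_fun_add hu.comp_mk_right hv.comp_mk_right]
  ring

theorem sliceLaplacian_sub (hu : ContDiffAt ℝ 2 u p) (hv : ContDiffAt ℝ 2 v p) :
    sliceLaplacian (fun q => u q - v q) p = sliceLaplacian u p - sliceLaplacian v p := by
  simp only [sliceLaplacian, deriv_deriv_eq_iteratedDeriv_two]
  rw [iteratedDeriv_fun_sub hu.comp_mk_left hv.comp_mk_left,
    iteratedDeriv_fun_sub hu.comp_mk_right hv.comp_mk_right]
  ring

theorem sliceLaplacian_const_mul (c : ℝ) (u : ℝ × ℝ → ℝ) (p : ℝ × ℝ) :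
    sliceLaplacian (fun q => c * u q) p = c * sliceLaplacian u p := by
  simp only [sliceLaplacian, deriv_const_mul_field']
  ring

theorem IsLocalMax.sliceLaplacian_nonpos (hmax : IsLocalMax u p) (hu : ContinuousAt u p) :
    sliceLaplacian u p ≤ 0 := by
  have hmk_left : ContinuousAt (fun x : ℝ => (x, p.2)) p.1 :=
    continuousAt_id.prodMk continuousAt_const
  have hmk_right : ContinuousAt (fun y : ℝ => (p.1, y)) p.2 :=
    continuousAt_const.prodMk continuousAt_id
  have hx := (hmax.comp_continuous hmk_left).deriv_deriv_nonpos (hu.comp hmk_left)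
  have hy := (hmax.comp_continuous hmk_right).deriv_deriv_nonpos (hu.comp hmk_right)
  exact add_nonpos hx hy

end SliceLaplacian

theorem sliceLaplacian_fst_sq_sub (c : ℝ) (p : ℝ × ℝ) :
    sliceLaplacian (fun q => q.1 ^ 2 - c) p = 2 := by
  have : deriv (fun x : ℝ => x ^ 2) = fun x => 2 * x := by ext; simp
  simp [sliceLaplacian, this]

section MaximumPrinciple

variable {U : Set (ℝ × ℝ)} {u : ℝ × ℝ → ℝ}

theorem nonpos_of_sliceLaplacian_pos (hU : IsOpen U) (hUb : Bornology.IsBounded U)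
    (hcont : ContinuousOn u (closure U)) (hΔ : ∀ p ∈ U, 0 < sliceLaplacian u p)
    (hfr : ∀ p ∈ frontier U, u p ≤ 0) : ∀ p ∈ closure U, u p ≤ 0 := by
  intro p hp
  obtain ⟨p₀, hp₀, hmax⟩ := hUb.isCompact_closure.exists_isMaxOn ⟨p, hp⟩ hcont
  by_cases hp₀U : p₀ ∈ U
  · have hnhds : closure U ∈ 𝓝 p₀ := mem_of_superset (hU.mem_nhds hp₀U) subset_closure
    have := (hmax.isLocalMax hnhds).sliceLaplacian_nonpos (hcont.continuousAt hnhds)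
    linarith [hΔ p₀ hp₀U]
  · exact (hmax hp).trans (hfr p₀ (hU.frontier_eq ▸ ⟨hp₀, hp₀U⟩))

theorem nonpos_of_sliceLaplacian_nonneg (hU : IsOpen U) (hUb : Bornology.IsBounded U)
    (hu : ContDiffOn ℝ 2 u U) (hcont : ContinuousOn u (closure U))
    (hΔ : ∀ p ∈ U, 0 ≤ sliceLaplacian u p) (hfr : ∀ p ∈ frontier U, u p ≤ 0) :
    ∀ p ∈ closure U, u p ≤ 0 := by
  obtain ⟨C, hC⟩ := hUb.isCompact_closure.exists_bound_of_continuousOn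
    (f := fun q : ℝ × ℝ => q.1 ^ 2) (by fun_prop)
  -- `ε (x² - C)` has Laplacian `2ε > 0` and is `≤ 0` on `closure U`
  have hperturb : ∀ ε > 0, ∀ p ∈ closure U, u p + ε * (p.1 ^ 2 - C) ≤ 0 := by
    intro ε hε
    have hsq : ∀ q ∈ closure U, q.1 ^ 2 - C ≤ 0 := fun q hq =>
      sub_nonpos.2 ((le_abs_self _).trans (hC q hq))
    refine nonpos_of_sliceLaplacian_pos hU hUb (by fun_prop) (fun p hp => ?_) (fun p hp => ?_)
    · have hsmooth : ContDiffAt ℝ 2 (fun q : ℝ × ℝ => ε * (q.1 ^ 2 - C)) p := by fun_prop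
      rw [sliceLaplacian_add (hu.contDiffAt (hU.mem_nhds hp)) hsmooth,
        sliceLaplacian_const_mul, sliceLaplacian_fst_sq_sub]
      linarith [hΔ p hp]
    · have := hsq p (frontier_subset_closure hp)
      nlinarith [hfr p hp]
  intro p hp
  refine ge_of_tendsto (x := 𝓝[>] 0) (f := fun ε => ε * (C - p.1 ^ 2))
    (((continuous_mul_const _).tendsto' 0 0 (zero_mul _)).mono_left nhdsWithin_le_nhds) ?_
  filter_upwards [self_mem_nhdsWithin] with ε hε
  linarith [hperturb ε hε p hp]

theorem abs_le_of_abs_le_on_frontier (hU : IsOpen U) (hUb : Bornology.IsBounded U)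
    {B : ℝ × ℝ → ℝ} (hu : HarmonicOnRect u U)
    (hB : ContDiffOn ℝ 2 B U) (hΔB : ∀ p ∈ U, sliceLaplacian B p ≤ 0)
    (hucont : ContinuousOn u (closure U)) (hBcont : ContinuousOn B (closure U))
    (hfr : ∀ p ∈ frontier U, |u p| ≤ B p) : ∀ p ∈ closure U, |u p| ≤ B p := by
  have key : ∀ σ : ℝ, |σ| = 1 → ∀ p ∈ closure U, σ * u p - B p ≤ 0 := by
    intro σ hσ
    refine nonpos_of_sliceLaplacian_nonneg hU hUb ((contDiffOn_const.mul hu.1).sub hB)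
      ((continuousOn_const.mul hucont).sub hBcont) (fun p hp => ?_) (fun p hp => ?_)
    · have hΔu : sliceLaplacian u p = 0 := hu.2 p hp
      rw [sliceLaplacian_sub (contDiffAt_const.mul (hu.1.contDiffAt (hU.mem_nhds hp)))
        (hB.contDiffAt (hU.mem_nhds hp)), sliceLaplacian_const_mul, hΔu]
      linarith [hΔB p hp]
    · have : σ * u p ≤ |u p| := (le_abs_self _).trans (by rw [abs_mul, hσ, one_mul])
      linarith [hfr p hp]
  intro p hp
  rw [abs_le]
  constructor <;> linarith [key 1 (by norm_num) p hp, key (-1) (by norm_num) p hp]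

end MaximumPrinciple

theorem sliceLaplacian_coshCos (a : ℝ) (p : ℝ × ℝ) :
    sliceLaplacian (fun q => cosh q.1 * cos (q.2 - a)) p = 0 := by
  simp [sliceLaplacian, deriv_mul_const_field', deriv_const_mul_field', deriv_comp_sub_const]

theorem cos_inv_two_pos : 0 < cos 2⁻¹ :=
  cos_pos_of_mem_Ioo ⟨by linarith [pi_pos], by linarith [pi_gt_three]⟩

theorem cos_inv_two_le_cos_sub_inv_two {t : ℝ} (ht : t ∈ Icc (0 : ℝ) 1) :
    cos 2⁻¹ ≤ cos (t - 2⁻¹) := by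
  rw [← cos_abs (t - 2⁻¹)]
  exact cos_le_cos_of_nonneg_of_le_pi (abs_nonneg _) (by linarith [pi_gt_three])
    (abs_le.2 ⟨by linarith [ht.1], by linarith [ht.2]⟩)

theorem Real.tendsto_cosh_atTop : Tendsto cosh atTop atTop := by
  refine tendsto_atTop_mono (fun x => ?_) (tendsto_exp_atTop.atTop_div_const two_pos)
  rw [cosh_eq]
  linarith [exp_pos (-x)]

theorem closure_Ioo_prod_Ioo {a b c d : ℝ} (hab : a < b) (hcd : c < d) :
    closure (Ioo a b ×ˢ Ioo c d) = Icc a b ×ˢ Icc c d := by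
  rw [closure_prod_eq, closure_Ioo hab.ne, closure_Ioo hcd.ne]

section Strip

variable {u : ℝ × ℝ → ℝ} {L M : ℝ}

theorem abs_le_coshCos_on_frontier (hL : 0 < L) (hM : ∀ p ∈ Icc (-L) L ×ˢ Icc 0 1, |u p| ≤ M)
    (hedge : ∀ s ∈ Icc (-L) L, u (s, 0) = 0 ∧ u (s, 1) = 0) :
    ∀ p ∈ frontier (Ioo (-L) L ×ˢ Ioo (0 : ℝ) 1),
      |u p| ≤ M / (cos 2⁻¹ * cosh L) * (cosh p.1 * cos (p.2 - 2⁻¹)) := by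
  have hM0 : 0 ≤ M :=
    (abs_nonneg _).trans (hM (L, 0) ⟨⟨by linarith, le_rfl⟩, ⟨le_rfl, zero_le_one⟩⟩)
  have hcos := cos_inv_two_pos
  have hbarrier_nonneg : ∀ s, ∀ t ∈ Icc (0 : ℝ) 1,
      0 ≤ M / (cos 2⁻¹ * cosh L) * (cosh s * cos (t - 2⁻¹)) := fun s t ht => by
    have := hcos.trans_le (cos_inv_two_le_cos_sub_inv_two ht)
    positivity
  have hLL : -L < L := by linarith
  rintro ⟨s, t⟩ hst
  rw [frontier_prod_eq, closure_Ioo hLL.ne, closure_Ioo zero_lt_one.ne, frontier_Ioo hLL,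
    frontier_Ioo zero_lt_one] at hst
  rcases hst with ⟨hs, rfl | rfl⟩ | ⟨hs, ht⟩
  · rw [(hedge s hs).1, abs_zero]
    exact hbarrier_nonneg s 0 ⟨le_rfl, zero_le_one⟩
  · rw [(hedge s hs).2, abs_zero]
    exact hbarrier_nonneg s 1 ⟨zero_le_one, le_rfl⟩
  · have hcosh : cosh s = cosh L := by rcases hs with rfl | rfl <;> simp
    have hs' : s ∈ Icc (-L) L := by rcases hs with rfl | rfl <;> constructor <;> linarith
    calc |u (s, t)| ≤ M := hM (s, t) ⟨hs', ht⟩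
      _ = M / (cos 2⁻¹ * cosh L) * (cosh L * cos 2⁻¹) := by
        rw [mul_comm (cosh L), div_mul_cancel₀ M (mul_pos hcos (cosh_pos L)).ne']
      _ ≤ M / (cos 2⁻¹ * cosh L) * (cosh s * cos (t - 2⁻¹)) := by
        rw [hcosh]; gcongr; exact cos_inv_two_le_cos_sub_inv_two ht

theorem abs_le_of_eq_zero_on_edges (hL : 0 < L) (hu : HarmonicOnRect u (Ioo (-L) L ×ˢ Ioo 0 1))
    (hcont : ContinuousOn u (Icc (-L) L ×ˢ Icc 0 1))
    (hM : ∀ p ∈ Icc (-L) L ×ˢ Icc 0 1, |u p| ≤ M)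
    (hedge : ∀ s ∈ Icc (-L) L, u (s, 0) = 0 ∧ u (s, 1) = 0) :
    ∀ p ∈ Icc (-L) L ×ˢ Icc 0 1, |u p| ≤ M * cosh p.1 / (cos 2⁻¹ * cosh L) := by
  have hM0 : 0 ≤ M :=
    (abs_nonneg _).trans (hM (L, 0) ⟨⟨by linarith, le_rfl⟩, ⟨le_rfl, zero_le_one⟩⟩)
  have hclosure := closure_Ioo_prod_Ioo (show -L < L by linarith) zero_lt_one
  have hbarrier : ∀ p ∈ Icc (-L) L ×ˢ Icc 0 1,
      |u p| ≤ M / (cos 2⁻¹ * cosh L) * (cosh p.1 * cos (p.2 - 2⁻¹)) := by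
    rw [← hclosure]
    exact abs_le_of_abs_le_on_frontier (isOpen_Ioo.prod isOpen_Ioo)
      ((Metric.isBounded_Ioo _ _).prod (Metric.isBounded_Ioo _ _)) hu (by fun_prop)
      (fun p _ => by rw [sliceLaplacian_const_mul, sliceLaplacian_coshCos, mul_zero])
      (hclosure ▸ hcont) (by fun_prop) (abs_le_coshCos_on_frontier hL hM hedge)
  intro p hp
  have hcos := cos_inv_two_pos
  calc |u p| ≤ M / (cos 2⁻¹ * cosh L) * (cosh p.1 * cos (p.2 - 2⁻¹)) := hbarrier p hp
    _ ≤ M / (cos 2⁻¹ * cosh L) * (cosh p.1 * 1) := by gcongr; exact cos_le_one _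
    _ = M * cosh p.1 / (cos 2⁻¹ * cosh L) := by ring

end Strip

theorem abs_le_of_harmonicOnRect {u : ℝ × ℝ → ℝ} {l M : ℝ} (hl : 1 < l)
    (hu : HarmonicOnRect u (Ioo (-l) l ×ˢ Ioo 0 1))
    (hbdd : ∀ p ∈ Ioo (-l) l ×ˢ Ioo 0 1, |u p| ≤ M)
    (hcont : ContinuousOn u (closure (Ioo (-l) l ×ˢ Ioo 0 1)))
    (hvanish : ∀ s, |s| ≤ l - 1 → u (s, 0) = 0 ∧ u (s, 1) = 0) :
    ∀ p ∈ Icc (-(l - 1)) (l - 1) ×ˢ Icc 0 1,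
      |u p| ≤ M * cosh p.1 / (cos 2⁻¹ * cosh (l - 1)) := by
  have hsub : Icc (-(l - 1)) (l - 1) ×ˢ Icc 0 1 ⊆ closure (Ioo (-l) l ×ˢ Ioo (0 : ℝ) 1) := by
    rw [closure_Ioo_prod_Ioo (by linarith) zero_lt_one]
    exact prod_mono (Icc_subset_Icc (by linarith) (by linarith)) subset_rfl
  exact abs_le_of_eq_zero_on_edges (by linarith)
    (hu.mono (prod_mono (Ioo_subset_Ioo (by linarith) (by linarith)) subset_rfl))
    (hcont.mono hsub) (fun p hp => hcont.abs_le_of_mem_closure hbdd p (hsub hp))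
    (fun s hs => hvanish s (abs_le.2 hs))

theorem rectangles_harmonic_decay (h : ℕ → ℝ × ℝ → ℝ) (M : ℝ)
    (hharm : ∀ l : ℕ, HarmonicOnRect (h l)
      (Set.Ioo (-(l : ℝ)) (l : ℝ) ×ˢ Set.Ioo (0 : ℝ) 1))
    (hbdd : ∀ l : ℕ, ∀ p ∈ Set.Ioo (-(l : ℝ)) (l : ℝ) ×ˢ Set.Ioo (0 : ℝ) 1,
      |h l p| ≤ M)
    (hcont : ∀ l : ℕ, ContinuousOn (h l)
      (closure (Set.Ioo (-(l : ℝ)) (l : ℝ) ×ˢ Set.Ioo (0 : ℝ) 1)))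
    (hvanish : ∀ l : ℕ, ∀ s : ℝ, |s| ≤ (l : ℝ) - 1 →
      h l (s, 0) = 0 ∧ h l (s, 1) = 0) :
    ∀ K : Set (ℝ × ℝ), IsCompact K → K ⊆ {p : ℝ × ℝ | p.2 ∈ Set.Ioo (0 : ℝ) 1} →
      ∀ ε > 0, ∃ N : ℕ, ∀ l ≥ N, ∀ p ∈ K, |h l p| ≤ ε := by
  intro K hK hKstrip ε hε
  have hM : 0 ≤ M := (abs_nonneg _).trans (hbdd 1 (0, 2⁻¹) (by norm_num))
  obtain ⟨R, hR⟩ := hK.exists_bound_of_continuousOn continuous_fst.continuousOn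
  have hdecay : Tendsto (fun l : ℕ => M * cosh R / (cos 2⁻¹ * cosh ((l : ℝ) - 1))) atTop (𝓝 0) :=
    tendsto_const_nhds.div_atTop <| Tendsto.const_mul_atTop cos_inv_two_pos <|
      tendsto_cosh_atTop.comp <| tendsto_atTop_add_const_right _ _ tendsto_natCast_atTop_atTop
  obtain ⟨N, hN⟩ := eventually_atTop.1 <| (hdecay.eventually (ge_mem_nhds hε)).and
    (tendsto_natCast_atTop_atTop.eventually_ge_atTop (R + 2))
  refine ⟨N, fun l hl p hp => ?_⟩
  obtain ⟨hsmall, hlarge⟩ := hN l hl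
  have hpR : |p.1| ≤ R := hR p hp
  have hcos := cos_inv_two_pos
  calc |h l p| ≤ M * cosh p.1 / (cos 2⁻¹ * cosh ((l : ℝ) - 1)) :=
        abs_le_of_harmonicOnRect (by linarith [abs_nonneg p.1]) (hharm l) (hbdd l) (hcont l)
          (hvanish l) p ⟨abs_le.1 (by linarith), Ioo_subset_Icc_self (hKstrip hp)⟩
    _ ≤ M * cosh R / (cos 2⁻¹ * cosh ((l : ℝ) - 1)) := by
      gcongr
      exact cosh_le_cosh.2 (hpR.trans (le_abs_self R))
    _ ≤ ε := hsmall
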